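/- Let q, k, M be nonzero vectors in ℝⁿ. Suppose CosSim(k, q) = β > 0 and CosSim(M, k) = α < 0, where CosSim(u,v) = ⟨u,v⟩/(‖u‖‖v‖). Then CosSim(M, q) ≤ 1 + αβ - α²/2 - β²/2. -/

import Mathlib

noncomputable def cosSim {n : ℕ} (u v : EuclideanSpace ℝ (Fin n)) : ℝ :=
  (inner ℝ u v : ℝ) / (‖u‖ * ‖v‖)

/-! The angle `a` between `M` and `k` and the angle `b` between `k` and `q` force the angle between
`M` and `q` to be at least `|a - b|` by the triangle inequality for angles, so its cosine is at most
`cos (a - b) = cos a cos b + sin a sin b ≤ cos a cos b + (sin² a + sin² b) / 2`. -/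

open InnerProductGeometry

theorem Real.cos_sub_le_one_add_cos_mul_cos_sub_sq_div_two (a b : ℝ) :
    Real.cos (a - b) ≤ 1 + Real.cos a * Real.cos b - Real.cos a ^ 2 / 2 - Real.cos b ^ 2 / 2 := by
  have h_amgm : Real.sin a * Real.sin b ≤ (Real.sin a ^ 2 + Real.sin b ^ 2) / 2 := by
    nlinarith [sq_nonneg (Real.sin a - Real.sin b)]
  rw [Real.cos_sub]
  nlinarith [Real.sin_sq_add_cos_sq a, Real.sin_sq_add_cos_sq b]

section InnerProductSpace

variable {V : Type*} [NormedAddCommGroup V] [InnerProductSpace ℝ V]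

theorem InnerProductGeometry.abs_angle_sub_angle_le_angle (x y z : V) :
    |angle x y - angle y z| ≤ angle x z := by
  have hxy := angle_le_angle_add_angle x z y
  have hyz := angle_le_angle_add_angle y x z
  rw [angle_comm z y] at hxy
  rw [angle_comm y x] at hyz
  exact abs_sub_le_iff.mpr ⟨by linarith, by linarith⟩

theorem InnerProductGeometry.cos_angle_le_cos_angle_sub_angle (x y z : V) :
    Real.cos (angle x z) ≤ Real.cos (angle x y - angle y z) := by
  rw [← Real.cos_abs (angle x y - angle y z)]
  exact Real.cos_le_cos_of_nonneg_of_le_pi (abs_nonneg _) (angle_le_pi x z)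
    (abs_angle_sub_angle_le_angle x y z)

end InnerProductSpace

-- Also when `u` or `v` is zero: both sides are then `0`.
theorem cosSim_eq_cos_angle {n : ℕ} (u v : EuclideanSpace ℝ (Fin n)) :
    cosSim u v = Real.cos (angle u v) :=
  (cos_angle u v).symm

theorem stmt0_general {n : ℕ} (q k M : EuclideanSpace ℝ (Fin n)) (α β : ℝ)
    (hβ : cosSim k q = β) (hα : cosSim M k = α) :
    cosSim M q ≤ 1 + α * β - α ^ 2 / 2 - β ^ 2 / 2 := by
  rw [cosSim_eq_cos_angle] at hα hβ ⊢
  subst hα hβ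
  exact (cos_angle_le_cos_angle_sub_angle M k q).trans
    (Real.cos_sub_le_one_add_cos_mul_cos_sub_sq_div_two _ _)

theorem stmt0 {n : ℕ} (q k M : EuclideanSpace ℝ (Fin n))
    (hq : q ≠ 0) (hk : k ≠ 0) (hM : M ≠ 0) (α β : ℝ)
    (hβ : cosSim k q = β) (hβpos : 0 < β)
    (hα : cosSim M k = α) (hαneg : α < 0) :
    cosSim M q ≤ 1 + α * β - α ^ 2 / 2 - β ^ 2 / 2 :=
  stmt0_general q k M α β hβ hα
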